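/- arXiv:2408.16550 — 2 statements merged into one kernel-verified Lean document; each statement's English description precedes it below -/
import Mathlib

section
/- Let k = (k₁, k₂) ∈ ℝ² with k ≠ 0, let g ∈ ℂ with g ≠ 0, and let j_x, j_y, b_z ∈ ℂ satisfy the two relations b_z = i · g · (k₁ j_y − k₂ j_x) / ‖k‖ (the vertical-field relation) and k₁ j_x + k₂ j_y = 0 (the current continuity condition). Then j_x and j_y are uniquely determined by b_z: namely j_x = i k₂ b_z / (g ‖k‖) and j_y = −i k₁ b_z / (g ‖k‖). -/
/-!
Write `c = k₁ j_y − k₂ j_x`. The continuity condition `k₁ j_x + k₂ j_y = 0` says that `(j_x, j_y)`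
is orthogonal to `k`, so it is the multiple `c / ‖k‖²` of the rotated vector `(−k₂, k₁)`. The
vertical-field relation determines `c` from `b_z` as soon as `g ≠ 0` and `k ≠ 0`.
-/

theorem sq_add_sq_mul_eq_of_mul_add_mul_eq_zero {R : Type*} [CommRing R] {a b x y : R}
    (h : a * x + b * y = 0) :
    (a ^ 2 + b ^ 2) * x = -b * (a * y - b * x) ∧ (a ^ 2 + b ^ 2) * y = a * (a * y - b * x) :=
  ⟨by linear_combination a * h, by linear_combination b * h⟩

theorem EuclideanSpace.ofReal_norm_sq_fin_two (k : EuclideanSpace ℝ (Fin 2)) :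
    ((‖k‖ : ℝ) : ℂ) ^ 2 = ((k 0 : ℝ) : ℂ) ^ 2 + ((k 1 : ℝ) : ℂ) ^ 2 := by
  have h : ‖k‖ ^ 2 = k 0 ^ 2 + k 1 ^ 2 := by
    simp [EuclideanSpace.norm_sq_eq, Fin.sum_univ_two]
  exact_mod_cast h

/-- Pointwise-in-frequency recoverability of a divergence-free current from the
vertical field component alone: if `b_z = i g (k₁ j_y - k₂ j_x)/‖k‖` and
`k₁ j_x + k₂ j_y = 0` with `k ≠ 0` and `g ≠ 0`, then
`j_x = i k₂ b_z/(g ‖k‖)` and `j_y = -i k₁ b_z/(g ‖k‖)`. -/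
theorem current_recoverable_from_vertical_field
    (k : EuclideanSpace ℝ (Fin 2)) (hk : k ≠ 0) (g : ℂ) (hg : g ≠ 0)
    (jx jy bz : ℂ)
    (hbz : bz = Complex.I * g * (((k 0 : ℝ) : ℂ) * jy - ((k 1 : ℝ) : ℂ) * jx) / (‖k‖ : ℂ))
    (hcont : ((k 0 : ℝ) : ℂ) * jx + ((k 1 : ℝ) : ℂ) * jy = 0) :
    jx = Complex.I * ((k 1 : ℝ) : ℂ) * bz / (g * (‖k‖ : ℂ)) ∧
      jy = -Complex.I * ((k 0 : ℝ) : ℂ) * bz / (g * (‖k‖ : ℂ)) := by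
  have hnorm : ((‖k‖ : ℝ) : ℂ) ≠ 0 := Complex.ofReal_ne_zero.mpr (norm_ne_zero_iff.mpr hk)
  obtain ⟨hjx, hjy⟩ := sq_add_sq_mul_eq_of_mul_add_mul_eq_zero hcont
  rw [← EuclideanSpace.ofReal_norm_sq_fin_two] at hjx hjy
  set c := ((k 0 : ℝ) : ℂ) * jy - ((k 1 : ℝ) : ℂ) * jx
  subst hbz
  constructor
  · field_simp
    linear_combination hjx - ((k 1 : ℝ) : ℂ) * c * Complex.I_sq
  · field_simp
    linear_combination hjy + ((k 0 : ℝ) : ℂ) * c * Complex.I_sq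
end

section
/- Let ψ¹ : ℝ → ℝ be continuously differentiable with compact support and let ψ̃¹ : ℝ → ℝ be continuous with compact support and ∫_ℝ ψ̃¹ = 0. Define ψ⁰ := (1/4)(ψ¹)' and ψ̃⁰(x) := −4 ∫_{−∞}^{x} ψ̃¹(t) dt, and for j, k ∈ ℤ write ψ_{j,k}(t) = 2^{j/2} ψ(2^j t − k). If the family (ψ¹, ψ̃¹) is biorthogonal, i.e. ∫_ℝ ψ¹_{j,k}(x) ψ̃¹_{j',k'}(x) dx = δ_{j,j'} δ_{k,k'} for all j, j', k, k' ∈ ℤ, then the derived family is also biorthogonal: ∫_ℝ ψ⁰_{j,k}(x) ψ̃⁰_{j',k'}(x) dx = δ_{j,j'} δ_{k,k'} for all j, j', k, k' ∈ ℤ. -/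
open MeasureTheory

/-- Dyadic scaled-translated family: `ψ_{j,k}(t) = 2^{j/2} ψ(2^j t - k)`. -/
noncomputable def dyadic (ψ : ℝ → ℝ) (j k : ℤ) (t : ℝ) : ℝ :=
  (2 : ℝ) ^ ((j : ℝ) / 2) * ψ ((2 : ℝ) ^ j * t - k)

/-!
Integrate by parts, moving the derivative from `(ψ¹)'_{j,k}` onto `(∫_{-∞}^· ψ̃¹)_{j',k'}`: the
boundary terms vanish because `ψ¹` has compact support, and the chain rule turns the integral into
`-2^{j'-j}` times `∫ ψ¹_{j,k} ψ̃¹_{j',k'} = δ_{j,j'} δ_{k,k'}`. The factor `2^{j'-j}` is `1` wherever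
the delta is nonzero, and `(1/4)(-4)` cancels the sign.
-/

theorem hasDerivAt_integral_Iic {E : Type*} [NormedAddCommGroup E] [NormedSpace ℝ E]
    [CompleteSpace E] {f : ℝ → E} (hf : Continuous f) (hfi : Integrable f) (x : ℝ) :
    HasDerivAt (fun u => ∫ t in Set.Iic u, f t) (f x) x := by
  have hsplit : ∀ u, ∫ t in Set.Iic u, f t = (∫ t in Set.Iic 0, f t) + ∫ t in (0 : ℝ)..u, f t :=
    fun u => by
      rw [← intervalIntegral.integral_Iic_sub_Iic hfi.integrableOn hfi.integrableOn,
        add_sub_cancel]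
  rw [funext hsplit]
  exact (hf.integral_hasStrictDerivAt 0 x).hasDerivAt.const_add _

theorem integral_mul_deriv_eq_neg_deriv_mul_of_hasCompactSupport {u v u' v' : ℝ → ℝ}
    (hu : ∀ x, HasDerivAt u (u' x) x) (hv : ∀ x, HasDerivAt v (v' x) x)
    (hu' : Continuous u') (hv' : Continuous v') (hus : HasCompactSupport u) :
    ∫ x, u x * v' x = -∫ x, u' x * v x := by
  have hu'_eq : deriv u = u' := funext fun x => (hu x).deriv
  have hu's : HasCompactSupport u' := hu'_eq ▸ hus.deriv
  have hucont : Continuous u := continuous_iff_continuousAt.2 fun x => (hu x).continuousAt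
  have hvcont : Continuous v := continuous_iff_continuousAt.2 fun x => (hv x).continuousAt
  exact integral_mul_deriv_eq_deriv_mul_of_integrable (fun x _ => hu x) (fun x _ => hv x)
    ((hucont.mul hv').integrable_of_hasCompactSupport hus.mul_right)
    ((hu'.mul hvcont).integrable_of_hasCompactSupport hu's.mul_right)
    ((hucont.mul hvcont).integrable_of_hasCompactSupport hus.mul_right)

section Dyadic

variable {ψ : ℝ → ℝ}

theorem dyadic_const_mul (c : ℝ) (j k : ℤ) (t : ℝ) :
    dyadic (fun s => c * ψ s) j k t = c * dyadic ψ j k t := by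
  simp only [dyadic]
  ring

theorem Continuous.dyadic (hψ : Continuous ψ) (j k : ℤ) : Continuous (dyadic ψ j k) := by
  unfold _root_.dyadic
  fun_prop

theorem HasCompactSupport.dyadic (hψ : HasCompactSupport ψ) (j k : ℤ) :
    HasCompactSupport (dyadic ψ j k) := by
  let affine : ℝ ≃ₜ ℝ :=
    (Homeomorph.mulLeft₀ ((2 : ℝ) ^ j) (zpow_ne_zero _ two_ne_zero)).trans
      (Homeomorph.subRight (k : ℝ))
  exact (hψ.comp_homeomorph affine).mul_left

theorem hasDerivAt_dyadic {ψ' : ℝ → ℝ} (hψ : ∀ t, HasDerivAt ψ (ψ' t) t) (j k : ℤ) (x : ℝ) :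
    HasDerivAt (dyadic ψ j k) (2 ^ j * dyadic ψ' j k x) x := by
  have haffine : HasDerivAt (fun t : ℝ => (2 : ℝ) ^ j * t - k) (2 ^ j) x := by
    simpa using ((hasDerivAt_id x).const_mul ((2 : ℝ) ^ j)).sub_const (k : ℝ)
  refine (((hψ _).comp x haffine).const_mul ((2 : ℝ) ^ ((j : ℝ) / 2))).congr_deriv ?_
  simp only [dyadic]
  ring

theorem integral_dyadic_deriv_mul_dyadic {ψ' Φ φ : ℝ → ℝ}
    (hψ : ∀ t, HasDerivAt ψ (ψ' t) t) (hΦ : ∀ t, HasDerivAt Φ (φ t) t)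
    (hψ' : Continuous ψ') (hφ : Continuous φ) (hψs : HasCompactSupport ψ) (j j' k k' : ℤ) :
    ∫ x, dyadic ψ' j k x * dyadic Φ j' k' x =
      -(2 ^ j' / 2 ^ j * ∫ x, dyadic ψ j k x * dyadic φ j' k' x) := by
  have hibp := integral_mul_deriv_eq_neg_deriv_mul_of_hasCompactSupport
    (hasDerivAt_dyadic hψ j k) (hasDerivAt_dyadic hΦ j' k')
    (continuous_const.mul (hψ'.dyadic j k)) (continuous_const.mul (hφ.dyadic j' k'))
    (hψs.dyadic j k)
  simp only [mul_left_comm (dyadic ψ j k _), mul_assoc, integral_const_mul] at hibp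
  have h2j : (2 : ℝ) ^ j ≠ 0 := zpow_ne_zero _ two_ne_zero
  field_simp
  linear_combination hibp

end Dyadic

theorem derived_family_biorthogonal_general (psi1 psi1t : ℝ → ℝ)
    (hpsi1 : ContDiff ℝ 1 psi1) (hpsi1s : HasCompactSupport psi1)
    (hpsi1t : Continuous psi1t) (hpsi1ts : HasCompactSupport psi1t)
    (hbi : ∀ j j' k k' : ℤ,
      ∫ x : ℝ, dyadic psi1 j k x * dyadic psi1t j' k' x =
        if j = j' ∧ k = k' then 1 else 0) :
    ∀ j j' k k' : ℤ,
      ∫ x : ℝ, dyadic (fun t => (1 / 4) * deriv psi1 t) j k x *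
          dyadic (fun u => -4 * ∫ t in Set.Iic u, psi1t t) j' k' x =
        if j = j' ∧ k = k' then 1 else 0 := by
  intro j j' k k'
  have hψ : ∀ t, HasDerivAt psi1 (deriv psi1 t) t :=
    fun t => (hpsi1.differentiable one_ne_zero t).hasDerivAt
  have hΦ := hasDerivAt_integral_Iic hpsi1t (hpsi1t.integrable_of_hasCompactSupport hpsi1ts)
  calc ∫ x, dyadic (fun t => (1 / 4) * deriv psi1 t) j k x *
          dyadic (fun u => -4 * ∫ t in Set.Iic u, psi1t t) j' k' x
      = -∫ x, dyadic (deriv psi1) j k x * dyadic (fun u => ∫ t in Set.Iic u, psi1t t) j' k' x := by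
        simp only [dyadic_const_mul, ← integral_neg]
        congr 1 with x
        ring
    _ = 2 ^ j' / 2 ^ j * ∫ x, dyadic psi1 j k x * dyadic psi1t j' k' x := by
        rw [integral_dyadic_deriv_mul_dyadic hψ hΦ (hpsi1.continuous_deriv le_rfl) hpsi1t hpsi1s,
          neg_neg]
    _ = if j = j' ∧ k = k' then 1 else 0 := by
        rw [hbi]
        split_ifs with h
        · simp [h.1, zpow_ne_zero]
        · simp

/-- Biorthogonality is preserved by the differentiation/antidifferentiation
construction: if `(ψ¹, ψ̃¹)` is a biorthogonal family, then so is the derived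
family `(ψ⁰, ψ̃⁰) = ((1/4)(ψ¹)', -4 ∫_{-∞}^· ψ̃¹)`. -/
theorem derived_family_biorthogonal (psi1 psi1t : ℝ → ℝ)
    (hpsi1 : ContDiff ℝ 1 psi1) (hpsi1s : HasCompactSupport psi1)
    (hpsi1t : Continuous psi1t) (hpsi1ts : HasCompactSupport psi1t)
    (hmean : ∫ t : ℝ, psi1t t = 0)
    (hbi : ∀ j j' k k' : ℤ,
      ∫ x : ℝ, dyadic psi1 j k x * dyadic psi1t j' k' x =
        if j = j' ∧ k = k' then 1 else 0) :
    ∀ j j' k k' : ℤ,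
      ∫ x : ℝ, dyadic (fun t => (1 / 4) * deriv psi1 t) j k x *
          dyadic (fun u => -4 * ∫ t in Set.Iic u, psi1t t) j' k' x =
        if j = j' ∧ k = k' then 1 else 0 :=
  derived_family_biorthogonal_general psi1 psi1t hpsi1 hpsi1s hpsi1t hpsi1ts hbi
end
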